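/- Let H be a subgroup of G and ω ∈ ℓ∞(G)*. Then ω*ℓ∞(G) ⊆ ℓ∞(G/H) if and only if (f·1_H)*ω = f(1_H)·ω for every f ∈ ℓ¹(G). -/

import Mathlib

set_option linter.unusedSectionVars false

open scoped ENNReal ComplexOrder

noncomputable section

namespace QG

variable {G : Type*} [Group G]

/-- `ℓ∞(G)`: bounded complex functions on `G`. -/
abbrev Linf (G : Type*) : Type _ := lp (fun _ : G => ℂ) ∞

/-- `ℓ¹(G)`: summable complex functions on `G`. -/
abbrev L1 (G : Type*) : Type _ := lp (fun _ : G => ℂ) 1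

/-- The dual space `ℓ∞(G)*`. -/
abbrev DualLinf (G : Type*) : Type _ := StrongDual ℂ (Linf G)

lemma summable_norm (f : L1 G) : Summable fun s => ‖f s‖ := by
  have h := (lp.memℓp f).summable (by simp)
  simpa using h

lemma norm_apply_le (x : Linf G) (s : G) : ‖x s‖ ≤ ‖x‖ :=
  lp.norm_apply_le_norm ENNReal.top_ne_zero x s

/-- The constant function `1` in `ℓ∞(G)`. -/
def one' : Linf G :=
  ⟨fun _ => (1 : ℂ), memℓp_infty ⟨1, by rintro r ⟨t, rfl⟩; simp⟩⟩

/-- Left translation: `(L_s x)(t) = x (s * t)`. -/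
def Ltrans (s : G) (x : Linf G) : Linf G :=
  ⟨fun t => x (s * t),
    memℓp_infty (BddAbove.mono (by rintro r ⟨t, rfl⟩; exact ⟨s * t, rfl⟩) (lp.memℓp x).bddAbove)⟩

@[simp] lemma Ltrans_apply (s : G) (x : Linf G) (t : G) : Ltrans s x t = x (s * t) := rfl

lemma norm_Ltrans_le (s : G) (x : Linf G) : ‖Ltrans s x‖ ≤ ‖x‖ := by
  rw [lp.norm_eq_ciSup]
  exact ciSup_le fun t => norm_apply_le x (s * t)

/-- The action `m * x` of `m ∈ ℓ∞(G)*` on `x ∈ ℓ∞(G)`: `(m*x)(s) = m (L_s x)`. -/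
def starAct (m : DualLinf G) (x : Linf G) : Linf G :=
  ⟨fun s => m (Ltrans s x),
    memℓp_infty ⟨‖m‖ * ‖x‖, by
      rintro r ⟨s, rfl⟩
      calc ‖m (Ltrans s x)‖ ≤ ‖m‖ * ‖Ltrans s x‖ := m.le_opNorm _
        _ ≤ ‖m‖ * ‖x‖ :=
          mul_le_mul_of_nonneg_left (norm_Ltrans_le s x) (norm_nonneg m)⟩⟩

@[simp] lemma starAct_apply (m : DualLinf G) (x : Linf G) (s : G) :
    starAct m x s = m (Ltrans s x) := rfl

lemma summable_mul_bound (f : L1 G) (x : Linf G) (t : G) :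
    Summable fun s => ‖f s * x (s * t)‖ := by
  refine Summable.of_nonneg_of_le (fun s => norm_nonneg _) (fun s => ?_)
    ((summable_norm f).mul_right ‖x‖)
  rw [norm_mul]
  exact mul_le_mul_of_nonneg_left (norm_apply_le x (s * t)) (norm_nonneg _)

/-- The right action of `ℓ¹(G)` on `ℓ∞(G)`: `(x * f)(t) = ∑_s f s * x (s * t)`. -/
def rAct (x : Linf G) (f : L1 G) : Linf G :=
  ⟨fun t => ∑' s, f s * x (s * t),
    memℓp_infty ⟨(∑' s, ‖f s‖) * ‖x‖, by
      rintro r ⟨t, rfl⟩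
      calc ‖∑' s, f s * x (s * t)‖ ≤ ∑' s, ‖f s * x (s * t)‖ :=
            norm_tsum_le_tsum_norm (summable_mul_bound f x t)
        _ ≤ ∑' s, ‖f s‖ * ‖x‖ :=
            Summable.tsum_le_tsum (fun s => by
                rw [norm_mul]
                exact mul_le_mul_of_nonneg_left (norm_apply_le x (s * t)) (norm_nonneg _))
              (summable_mul_bound f x t) ((summable_norm f).mul_right _)
        _ = (∑' s, ‖f s‖) * ‖x‖ := tsum_mul_right⟩⟩

@[simp] lemma rAct_apply (x : Linf G) (f : L1 G) (t : G) :
    rAct x f t = ∑' s, f s * x (s * t) := rfl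

/-- The shear equivalence of `G × G`. -/
def shearEquiv (G : Type*) [Group G] : G × G ≃ G × G where
  toFun p := (p.2, p.2⁻¹ * p.1)
  invFun p := (p.1 * p.2, p.1)
  left_inv p := by simp
  right_inv p := by simp

lemma conv_prod_summable (f g : L1 G) :
    Summable fun p : G × G => ‖f p.2‖ * ‖g (p.2⁻¹ * p.1)‖ := by
  have h0 : Summable fun p : G × G => ‖f p.1‖ * ‖g p.2‖ :=
    (summable_norm f).mul_of_nonneg (summable_norm g) (fun _ => norm_nonneg _)
      (fun _ => norm_nonneg _)
  have key : Summable ((fun p : G × G => ‖f p.1‖ * ‖g p.2‖) ∘ (shearEquiv G)) :=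
    (shearEquiv G).summable_iff.mpr h0
  have heq : ((fun p : G × G => ‖f p.1‖ * ‖g p.2‖) ∘ (shearEquiv G)) =
      fun p : G × G => ‖f p.2‖ * ‖g (p.2⁻¹ * p.1)‖ := by
    funext p
    simp [shearEquiv, Function.comp]
  rwa [heq] at key

lemma conv_memℓp (f g : L1 G) : Memℓp (fun t : G => ∑' s, f s * g (s⁻¹ * t)) 1 := by
  have hp := conv_prod_summable f g
  obtain ⟨h1, h2⟩ :=
    (summable_prod_of_nonneg (fun p => mul_nonneg (norm_nonneg _) (norm_nonneg _))).1 hp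
  apply memℓp_gen
  simp only [ENNReal.toReal_one, Real.rpow_one]
  refine Summable.of_nonneg_of_le (fun t => norm_nonneg _) (fun t => ?_) h2
  calc ‖∑' s, f s * g (s⁻¹ * t)‖ ≤ ∑' s, ‖f s * g (s⁻¹ * t)‖ :=
        norm_tsum_le_tsum_norm (by simpa only [norm_mul] using h1 t)
    _ = ∑' s, ‖f s‖ * ‖g (s⁻¹ * t)‖ := tsum_congr fun s => norm_mul _ _

/-- Convolution on `ℓ¹(G)`: `(f * g)(t) = ∑_s f s * g (s⁻¹ t)`. -/
def conv (f g : L1 G) : L1 G :=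
  ⟨fun t => ∑' s, f s * g (s⁻¹ * t), conv_memℓp f g⟩

@[simp] lemma conv_apply (f g : L1 G) (t : G) : conv f g t = ∑' s, f s * g (s⁻¹ * t) := rfl

open Classical in
/-- The unit `ε = δ_e` of the convolution algebra `ℓ¹(G)`. -/
def eps : L1 G :=
  ⟨fun t => if t = 1 then 1 else 0, by
    apply memℓp_gen
    refine summable_of_ne_finset_zero (s := ({1} : Finset G)) ?_
    intro t ht
    simp only [Finset.mem_singleton] at ht
    simp [ht]⟩

open Classical in
/-- Multiplication by the indicator function of `H`: `f · 1_H`. -/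
def mulIndic (H : Subgroup G) (f : L1 G) : L1 G :=
  ⟨fun s => if s ∈ H then f s else 0, by
    apply memℓp_gen
    simp only [ENNReal.toReal_one, Real.rpow_one]
    refine Summable.of_nonneg_of_le (fun s => norm_nonneg _) (fun s => ?_) (summable_norm f)
    by_cases h : s ∈ H <;> simp [h]⟩

open Classical in
/-- The indicator function `1_H ∈ ℓ∞(G)` of a subgroup `H`. -/
def indic (H : Subgroup G) : Linf G :=
  ⟨fun s => if s ∈ H then 1 else 0,
    memℓp_infty ⟨1, by rintro r ⟨s, rfl⟩; by_cases h : s ∈ H <;> simp [h]⟩⟩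

/-- A state on `ℓ∞(G)`: unital positive functional. -/
def IsState (m : DualLinf G) : Prop :=
  m one' = 1 ∧ ∀ x : Linf G, (∀ s, 0 ≤ x s) → 0 ≤ m x

/-- `f ∈ Ann_L(m)`, i.e. `f * m = 0`. -/
def memAnnL (m : DualLinf G) (f : L1 G) : Prop :=
  ∀ x : Linf G, ∑' s, f s * m (Ltrans s x) = 0

/-- `f ∈ Inv_L(m, x₀)`, i.e. `f * m = f(x₀) · m`. -/
def memInvLx (m : DualLinf G) (x₀ : Linf G) (f : L1 G) : Prop :=
  ∀ x : Linf G, ∑' s, f s * m (Ltrans s x) = (∑' s, f s * x₀ s) * m x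

/-- `f ∈ Inv_L(m)`, i.e. `f * m = f(1) · m`. -/
def memInvL (m : DualLinf G) (f : L1 G) : Prop :=
  ∀ x : Linf G, ∑' s, f s * m (Ltrans s x) = (∑' s, f s) * m x

/-- A right idempotent state: a state with `m (m * x) = m x` for all `x`. -/
def IsRightIdempotentState (m : DualLinf G) : Prop :=
  IsState m ∧ ∀ x : Linf G, m (starAct m x) = m x

/-- A character of `G` in `ℓ∞(G)`. -/
def IsCharacter (x : Linf G) : Prop :=
  (∀ s t : G, x (s * t) = x s * x t) ∧ ∀ s : G, ‖x s‖ = 1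

/-- `ℓ∞(G/H)`, the right-`H`-invariant elements of `ℓ∞(G)`. -/
def LinfQuot (H : Subgroup G) : Set (Linf G) :=
  {x | ∀ s : G, ∀ h ∈ H, x (s * h) = x s}

/-- `J¹(G,H)`, the preannihilator of `ℓ∞(G/H)` in `ℓ¹(G)`. -/
def J1 (H : Subgroup G) : Set (L1 G) :=
  {f | ∀ x ∈ LinfQuot H, ∑' s, f s * x s = 0}

/-- `E` witnesses relative amenability of `ℓ∞(G/H)`: a unital positive
`ℓ¹(G)`-module map `ℓ∞(G) → ℓ∞(G)` with range inside `ℓ∞(G/H)`. -/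
def IsRelAmenMap (H : Subgroup G) (E : Linf G →ₗ[ℂ] Linf G) : Prop :=
  E one' = one' ∧
  (∀ x : Linf G, (∀ s, 0 ≤ x s) → ∀ s, 0 ≤ E x s) ∧
  (∀ x : Linf G, E x ∈ LinfQuot H) ∧
  (∀ (x : Linf G) (f : L1 G), E (rAct x f) = rAct (E x) f)

/-- `ℓ∞(G/H)` is relatively amenable. -/
def RelAmen (H : Subgroup G) : Prop :=
  ∃ E : Linf G →ₗ[ℂ] Linf G, IsRelAmenMap H E

/-- `ℓ∞(G/H)` is amenable. -/
def Amen (H : Subgroup G) : Prop :=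
  ∃ E : Linf G →ₗ[ℂ] Linf G, IsRelAmenMap H E ∧ ∀ x ∈ LinfQuot H, E x = x

/-- Amenability of a discrete group: existence of a left invariant mean. -/
def GroupAmenable (K : Type*) [Group K] : Prop :=
  ∃ μ : DualLinf K, IsState μ ∧ ∀ (k : K) (y : Linf K), μ (Ltrans k y) = μ y

/-- `H`-invariance of a functional on `ℓ∞(G)`. -/
def HInvariant (H : Subgroup G) (μ : DualLinf G) : Prop :=
  ∀ h ∈ H, ∀ x : Linf G, μ (Ltrans h x) = μ x

/-- `J` has a bounded right approximate identity contained in `S`. -/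
def HasBraiIn (J S : Set (L1 G)) : Prop :=
  ∃ (ι : Type) (l : Filter ι) (e : ι → L1 G), l.NeBot ∧
    (∃ C : ℝ, ∀ i, ‖e i‖ ≤ C) ∧ (∀ i, e i ∈ S) ∧
    ∀ f ∈ J, Filter.Tendsto (fun i => ‖conv f (e i) - f‖) l (nhds 0)

lemma one'_mem_LinfQuot (H : Subgroup G) : (one' : Linf G) ∈ LinfQuot H :=
  fun _ _ _ => rfl

lemma Ltrans_mem_LinfQuot {H : Subgroup G} {x : Linf G} (hx : x ∈ LinfQuot H) (s : G) :
    Ltrans s x ∈ LinfQuot H := by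
  intro t h hh
  show x (s * (t * h)) = x (s * t)
  rw [← mul_assoc]
  exact hx (s * t) h hh

/-- `ℓ∞(G/H)` as a subspace of `ℓ∞(G)`. -/
def LinfQuotSub (H : Subgroup G) : Submodule ℂ (Linf G) where
  carrier := LinfQuot H
  add_mem' := by
    intro a b ha hb s h hh
    show (a + b : Linf G) (s * h) = (a + b : Linf G) s
    rw [lp.coeFn_add]
    simp only [Pi.add_apply]
    rw [ha s h hh, hb s h hh]
  zero_mem' := by
    intro s h hh
    show (0 : Linf G) (s * h) = (0 : Linf G) s
    rw [lp.coeFn_zero]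
    simp
  smul_mem' := by
    intro c a ha s h hh
    show (c • a : Linf G) (s * h) = (c • a : Linf G) s
    rw [lp.coeFn_smul]
    simp only [Pi.smul_apply]
    rw [ha s h hh]

/-- The weak* topology on `ℓ∞(G) = ℓ¹(G)*`: the topology induced by the
pairings against elements of `ℓ¹(G)`. -/
def weakStarTop (G : Type*) [Group G] : TopologicalSpace (Linf G) :=
  TopologicalSpace.induced (fun (y : Linf G) => fun f : L1 G => ∑' s, f s * y s)
    Pi.topologicalSpace

/-!
Both conditions say that `ω` is invariant under left translation by `H`: the first because
`(ω * x)(s h) = ω (L_h (L_s x))`, the second because `((f·1_H) * ω)(x) = ∑_{h ∈ H} f(h) ω(L_h x)`,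
which can be tested on the point masses `f = δ_h`, `h ∈ H`.
-/

lemma Ltrans_one (x : Linf G) : Ltrans 1 x = x :=
  lp.ext <| funext fun t => by simp

lemma Ltrans_mul (s h : G) (x : Linf G) : Ltrans (s * h) x = Ltrans h (Ltrans s x) :=
  lp.ext <| funext fun t => by simp [mul_assoc]

lemma mulIndic_apply_of_mem {H : Subgroup G} (f : L1 G) {s : G} (hs : s ∈ H) :
    mulIndic H f s = f s :=
  if_pos hs

lemma mulIndic_apply_of_notMem {H : Subgroup G} (f : L1 G) {s : G} (hs : s ∉ H) :
    mulIndic H f s = 0 :=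
  if_neg hs

open Classical in
lemma mulIndic_single_of_mem {H : Subgroup G} {h : G} (hh : h ∈ H) (a : ℂ) :
    mulIndic H (lp.single 1 h a) = lp.single 1 h a := by
  ext s
  by_cases hs : s ∈ H
  · exact mulIndic_apply_of_mem _ hs
  · rw [mulIndic_apply_of_notMem _ hs, lp.single_apply_ne _ _ _ (ne_of_mem_of_not_mem hh hs).symm]

open Classical in
lemma tsum_single_mul (h : G) (g : G → ℂ) :
    ∑' s, (lp.single 1 h 1 : L1 G) s * g s = g h := by
  rw [tsum_eq_single h fun s hs => by rw [lp.single_apply_ne _ _ _ hs, zero_mul],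
    lp.single_apply_self, one_mul]

open Classical in
lemma tsum_single (h : G) : ∑' s, (lp.single 1 h 1 : L1 G) s = 1 := by
  simpa only [mul_one] using tsum_single_mul h fun _ => 1

lemma forall_starAct_mem_LinfQuot_iff (H : Subgroup G) (ω : DualLinf G) :
    (∀ x : Linf G, starAct ω x ∈ LinfQuot H) ↔ HInvariant H ω := by
  constructor
  · intro hω h hh x
    simpa [Ltrans_one] using hω x 1 h hh
  · intro hω x s h hh
    simp only [starAct_apply, Ltrans_mul, hω h hh]

lemma hInvariant_iff_forall_memInvL_mulIndic (H : Subgroup G) (ω : DualLinf G) :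
    HInvariant H ω ↔ ∀ f : L1 G, memInvL ω (mulIndic H f) := by
  classical
  constructor
  · intro hω f x
    rw [← tsum_mul_right]
    refine tsum_congr fun s => ?_
    by_cases hs : s ∈ H
    · rw [hω s hs]
    · rw [mulIndic_apply_of_notMem f hs, zero_mul, zero_mul]
  · intro hf h hh x
    have := hf (lp.single 1 h 1) x
    rwa [mulIndic_single_of_mem hh, tsum_single_mul, tsum_single, one_mul] at this

/-- `ω * ℓ∞(G) ⊆ ℓ∞(G/H)` iff `(f·1_H) * ω = f(1_H) · ω` for all `f ∈ ℓ¹(G)`. -/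
theorem statement8 (H : Subgroup G) (ω : DualLinf G) :
    (∀ x : Linf G, starAct ω x ∈ LinfQuot H) ↔
      ∀ (f : L1 G) (x : Linf G),
        ∑' s, mulIndic H f s * ω (Ltrans s x) = (∑' s, mulIndic H f s) * ω x :=
  (forall_starAct_mem_LinfQuot_iff H ω).trans (hInvariant_iff_forall_memInvL_mulIndic H ω)

end QG
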